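/- Let u ⊆ {1,…,s} be nonempty and k ∈ {0,1,…,m−1}^{|u|}. If the matrix C_{u,k+1} (with |u| + |k| rows) has full row rank over F₂, then Γ_{u,k} = 0. -/
import Mathlib


open Finset

noncomputable section

/-- The bit vector `i⃗ ∈ F₂^m` of the integer `i = Σ_{ℓ=1}^m i_ℓ 2^{ℓ-1}`. -/
def bvec (m : ℕ) (i : ℕ) : Fin m → ZMod 2 :=
  fun ℓ => if Nat.testBit i ℓ.1 then 1 else 0

/-- The `(r+1)`-st row (i.e. `r` with 0-indexing) of an `m × m` matrix over `F₂`,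
as a vector in `F₂^m`; junk value `0` if `r ≥ m` (never used under the hypotheses below). -/
def rowAt (m : ℕ) (A : Matrix (Fin m) (Fin m) (ZMod 2)) (r : ℕ) : Fin m → ZMod 2 :=
  fun ℓ => if h : r < m then A ⟨r, h⟩ ℓ else 0

/-- The stacked matrix `C_{u,k}`: for each `j ∈ u`, the first `k j` rows of `C j`. -/
def stack {m s : ℕ} (C : Fin s → Matrix (Fin m) (Fin m) (ZMod 2))
    (u : Finset (Fin s)) (k : Fin s → ℕ) :
    Matrix ((j : {x // x ∈ u}) × Fin (k j.1)) (Fin m) (ZMod 2) :=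
  fun p => rowAt m (C p.1.1) p.2.1

/-- `∇C_{u,k}`: the matrix whose rows are the `(k j + 1)`-st rows (1-indexed) of `C j`, `j ∈ u`. -/
def grad {m s : ℕ} (C : Fin s → Matrix (Fin m) (Fin m) (ZMod 2))
    (u : Finset (Fin s)) (k : Fin s → ℕ) :
    Matrix {x // x ∈ u} (Fin m) (ZMod 2) :=
  fun j => rowAt m (C j.1) (k j.1)

/-- The coordinate `x_{ij} ∈ [0,1)` of the digital net generated by `C₁,…,C_s`:
`x_{ij} = Σ_{ℓ=1}^m y_ℓ 2^{-ℓ}` where `y = C_j · i⃗` over `F₂`. -/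
def pt {m s : ℕ} (C : Fin s → Matrix (Fin m) (Fin m) (ZMod 2)) (i : ℕ) (j : Fin s) : ℝ :=
  ∑ ℓ : Fin m, (((C j).mulVec (bvec m i) ℓ).val : ℝ) / 2 ^ (ℓ.1 + 1)

/-- The factor `N`: with `M(x,x') = max{k ∈ ℕ₀ : ⌊2^k x⌋ = ⌊2^k x'⌋}` (the number of matching
leading binary digits), `Nf x x' c` equals `1` if `M(x,x') > c` (equivalently the first `c+1`
binary digits match), `-1` if `M(x,x') = c` (the first `c` digits match but not `c+1`), and
`0` if `M(x,x') < c`. -/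
def Nf (x x' : ℝ) (c : ℕ) : ℤ :=
  if ⌊(2:ℝ) ^ (c + 1) * x⌋ = ⌊(2:ℝ) ^ (c + 1) * x'⌋ then 1
  else if ⌊(2:ℝ) ^ c * x⌋ = ⌊(2:ℝ) ^ c * x'⌋ then -1
  else 0

/-- The gain coefficient `Γ_{u,k} = 2^{-m} Σ_{i=0}^{2^m-1} Σ_{i'=0}^{2^m-1} ∏_{j∈u} N_{i,i',j}`. -/
def Gam {m s : ℕ} (C : Fin s → Matrix (Fin m) (Fin m) (ZMod 2))
    (u : Finset (Fin s)) (k : Fin s → ℕ) : ℚ :=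
  (2 ^ m : ℚ)⁻¹ * ∑ i ∈ Finset.range (2 ^ m), ∑ i' ∈ Finset.range (2 ^ m),
      ∏ j ∈ u, (Nf (pt C i j) (pt C i' j) (k j) : ℚ)

-- auxiliary lemmas
lemma testBit_sum_aux : ∀ (m : ℕ) (d : Fin m → ℕ), (∀ ℓ, d ℓ ≤ 1) → ∀ (t : ℕ),
    Nat.testBit (∑ ℓ, d ℓ * 2 ^ ℓ.1) t = decide (∃ h : t < m, d ⟨t, h⟩ = 1) := by
  intro m
  induction m with
  | zero => intro d hd t; simp
  | succ n ih =>
    intro d hd t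
    have hsum : (∑ ℓ : Fin (n+1), d ℓ * 2 ^ ℓ.1)
        = d 0 + 2 * ∑ ℓ : Fin n, d ℓ.succ * 2 ^ ℓ.1 := by
      rw [Fin.sum_univ_succ, Finset.mul_sum]
      congr 1
      · simp
      · apply Finset.sum_congr rfl; intro ℓ _; rw [Fin.val_succ]; ring
    cases t with
    | zero =>
      rw [hsum, Nat.testBit_zero]
      have h1 : (d 0 + 2 * ∑ ℓ : Fin n, d ℓ.succ * 2 ^ ℓ.1) % 2 = d 0 := by
        rw [Nat.add_mul_mod_self_left, Nat.mod_eq_of_lt (by have := hd 0; omega)]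
      rw [h1]
      rw [decide_eq_decide]
      constructor
      · intro h; exact ⟨Nat.succ_pos n, h⟩
      · rintro ⟨h, hh⟩; exact hh
    | succ t =>
      rw [hsum, Nat.testBit_add_one]
      have h1 : (d 0 + 2 * ∑ ℓ : Fin n, d ℓ.succ * 2 ^ ℓ.1) / 2
          = ∑ ℓ : Fin n, d ℓ.succ * 2 ^ ℓ.1 := by
        rw [Nat.add_mul_div_left _ _ (by norm_num), Nat.div_eq_of_lt (by have := hd 0; omega)]
        omega
      rw [h1, ih (fun ℓ => d ℓ.succ) (fun ℓ => hd ℓ.succ) t]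
      rw [decide_eq_decide]
      constructor
      · rintro ⟨h, hh⟩; exact ⟨by omega, hh⟩
      · rintro ⟨h, hh⟩; exact ⟨by omega, hh⟩

lemma testBit_div_pow (a p t : ℕ) : (a / 2 ^ p).testBit t = a.testBit (p + t) := by
  rw [Nat.testBit_eq_decide_div_mod_eq, Nat.testBit_eq_decide_div_mod_eq, Nat.div_div_eq_div_mul, ← pow_add]

lemma div_pow_eq_iff (a b p : ℕ) :
    a / 2 ^ p = b / 2 ^ p ↔ ∀ t, a.testBit (p + t) = b.testBit (p + t) := by
  constructor
  · intro h t
    rw [← testBit_div_pow, ← testBit_div_pow, h]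
  · intro h
    apply Nat.eq_of_testBit_eq
    intro t
    rw [testBit_div_pow, testBit_div_pow, h]

lemma floor_cast_div_pow (N p : ℕ) : ⌊(N : ℝ) / 2 ^ p⌋ = ((N / 2 ^ p : ℕ) : ℤ) := by
  have h2 : (0:ℝ) < 2 ^ p := by positivity
  rw [Int.floor_eq_iff]
  constructor
  · rw [le_div_iff₀ h2]
    exact_mod_cast Nat.div_mul_le_self N (2 ^ p)
  · rw [div_lt_iff₀ h2]
    have h1 := Nat.div_add_mod N (2 ^ p)
    have h2' : N % 2 ^ p < 2 ^ p := Nat.mod_lt _ (Nat.two_pow_pos p)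
    have h3 : N < (N / 2 ^ p + 1) * 2 ^ p := by
      calc N = 2 ^ p * (N / 2 ^ p) + N % 2 ^ p := h1.symm
      _ < 2 ^ p * (N / 2 ^ p) + 2 ^ p := by omega
      _ = (N / 2 ^ p + 1) * 2 ^ p := by ring
    push_cast
    exact_mod_cast h3

section digits

variable {m s : ℕ} (C : Fin s → Matrix (Fin m) (Fin m) (ZMod 2))

/-- The binary digits of `x_{ij}`. -/
def dig (i : ℕ) (j : Fin s) (ℓ : Fin m) : ℕ := ((C j).mulVec (bvec m i) ℓ).val

lemma dig_le (i : ℕ) (j : Fin s) (ℓ : Fin m) : dig C i j ℓ ≤ 1 := by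
  show ((C j).mulVec (bvec m i) ℓ).val ≤ 1
  have := ZMod.val_lt ((C j).mulVec (bvec m i) ℓ); omega

/-- `x_{ij}` as a dyadic integer numerator. -/
def Nnat (i : ℕ) (j : Fin s) : ℕ := ∑ ℓ : Fin m, dig C i j ℓ.rev * 2 ^ ℓ.1

lemma testBit_Nnat (i : ℕ) (j : Fin s) (t : ℕ) : (Nnat C i j).testBit t
    = decide (∃ h : t < m, dig C i j (Fin.rev ⟨t, h⟩) = 1) :=
  testBit_sum_aux m (fun ℓ => dig C i j ℓ.rev) (fun ℓ => dig_le C i j ℓ.rev) t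

lemma pt_eq (i : ℕ) (j : Fin s) : pt C i j = (Nnat C i j : ℝ) / 2 ^ m := by
  rw [pt, Nnat]
  push_cast
  rw [Finset.sum_div]
  rw [← Fin.rev_involutive.bijective.sum_comp
    (fun ℓ : Fin m => (dig C i j ℓ.rev : ℝ) * 2 ^ ℓ.1 / 2 ^ m)]
  apply Finset.sum_congr rfl
  intro ℓ _
  simp only [Fin.rev_rev]
  have hℓ2 := ℓ.2
  have h2 : (2:ℝ) ^ (Fin.rev ℓ).1 * 2 ^ (ℓ.1 + 1) = 2 ^ m := by
    rw [← pow_add]; congr 1; simp [Fin.val_rev]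
  rw [dig]
  rw [div_eq_div_iff (by positivity) (by positivity), ← h2]
  ring

lemma floor_pt (i : ℕ) (j : Fin s) {c : ℕ} (hc : c ≤ m) :
    ⌊(2:ℝ) ^ c * pt C i j⌋ = ((Nnat C i j / 2 ^ (m - c) : ℕ) : ℤ) := by
  rw [pt_eq]
  have h2 : (2:ℝ) ^ (m - c) * 2 ^ c = 2 ^ m := by rw [← pow_add]; congr 1; omega
  have h : (2:ℝ) ^ c * ((Nnat C i j : ℝ) / 2 ^ m) = (Nnat C i j : ℝ) / 2 ^ (m - c) := by
    field_simp
    rw [← h2]; ring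
  rw [h, floor_cast_div_pow]

lemma floor_eq_floor_iff (i i' : ℕ) (j : Fin s) {c : ℕ} (hc : c ≤ m) :
    ⌊(2:ℝ) ^ c * pt C i j⌋ = ⌊(2:ℝ) ^ c * pt C i' j⌋ ↔
      ∀ ℓ : Fin m, ℓ.1 < c → (C j).mulVec (bvec m i) ℓ = (C j).mulVec (bvec m i') ℓ := by
  rw [floor_pt C i j hc, floor_pt C i' j hc, Nat.cast_inj, div_pow_eq_iff]
  constructor
  · intro h ℓ hℓ
    have hℓ2 := ℓ.2
    have hq : m - c + (c - 1 - ℓ.1) < m := by omega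
    have hrev : Fin.rev (⟨m - c + (c - 1 - ℓ.1), hq⟩ : Fin m) = ℓ := by
      apply Fin.ext; simp [Fin.val_rev]; omega
    have ht := h (c - 1 - ℓ.1)
    rw [testBit_Nnat, testBit_Nnat, decide_eq_decide] at ht
    have h1 : dig C i j ℓ = 1 ↔ dig C i' j ℓ = 1 := by
      constructor
      · intro hd
        obtain ⟨h', hd'⟩ := ht.mp ⟨hq, by rw [hrev]; exact hd⟩
        rw [hrev] at hd'; exact hd'
      · intro hd
        obtain ⟨h', hd'⟩ := ht.mpr ⟨hq, by rw [hrev]; exact hd⟩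
        rw [hrev] at hd'; exact hd'
    apply ZMod.val_injective 2
    have e1 := dig_le C i j ℓ
    have e2 := dig_le C i' j ℓ
    show dig C i j ℓ = dig C i' j ℓ
    by_cases hd : dig C i j ℓ = 1
    · rw [hd, h1.mp hd]
    · have hd' : ¬ dig C i' j ℓ = 1 := fun hh => hd (h1.mpr hh)
      omega
  · intro h t
    rw [testBit_Nnat, testBit_Nnat, decide_eq_decide]
    constructor
    · rintro ⟨h', hd⟩
      refine ⟨h', ?_⟩
      have hℓc : (Fin.rev (⟨m - c + t, h'⟩ : Fin m)).1 < c := by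
        simp [Fin.val_rev]; omega
      have heq := h _ hℓc
      show ((C j).mulVec (bvec m i') (Fin.rev ⟨m - c + t, h'⟩)).val = 1
      rw [← heq]
      exact hd
    · rintro ⟨h', hd⟩
      refine ⟨h', ?_⟩
      have hℓc : (Fin.rev (⟨m - c + t, h'⟩ : Fin m)).1 < c := by
        simp [Fin.val_rev]; omega
      have heq := h _ hℓc
      show ((C j).mulVec (bvec m i) (Fin.rev ⟨m - c + t, h'⟩)).val = 1
      rw [heq]
      exact hd






lemma Nf_eq (i i' : ℕ) (j : Fin s) {c : ℕ} (hc : c + 1 ≤ m) :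
    (Nf (pt C i j) (pt C i' j) c : ℚ) =
      if (∀ ℓ : Fin m, ℓ.1 < c → (C j).mulVec (bvec m i) ℓ = (C j).mulVec (bvec m i') ℓ) then
        (if (C j).mulVec (bvec m i) ⟨c, hc⟩ = (C j).mulVec (bvec m i') ⟨c, hc⟩ then 1 else -1)
      else 0 := by
  have hA := floor_eq_floor_iff C i i' j (c := c + 1) hc
  have hB := floor_eq_floor_iff C i i' j (c := c) (by omega)
  by_cases hcond : ∀ ℓ : Fin m, ℓ.1 < c → (C j).mulVec (bvec m i) ℓ = (C j).mulVec (bvec m i') ℓ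
  · by_cases hd : (C j).mulVec (bvec m i) ⟨c, hc⟩ = (C j).mulVec (bvec m i') ⟨c, hc⟩
    · have h1 : ⌊(2:ℝ) ^ (c+1) * pt C i j⌋ = ⌊(2:ℝ) ^ (c+1) * pt C i' j⌋ := by
        rw [hA]; intro ℓ hℓ
        rcases Nat.lt_or_ge ℓ.1 c with h'|h'
        · exact hcond ℓ h'
        · have hec : ℓ = ⟨c, hc⟩ := Fin.ext (by show ℓ.1 = c; omega)
          rw [hec]; exact hd
      simp only [Nf, if_pos h1, Int.cast_one]
      rw [if_pos hcond, if_pos hd]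
    · have h1 : ¬ (⌊(2:ℝ) ^ (c+1) * pt C i j⌋ = ⌊(2:ℝ) ^ (c+1) * pt C i' j⌋) := by
        rw [hA]; intro hall; exact hd (hall ⟨c, hc⟩ (Nat.lt_succ_self c))
      have h2 : ⌊(2:ℝ) ^ c * pt C i j⌋ = ⌊(2:ℝ) ^ c * pt C i' j⌋ := hB.mpr hcond
      simp only [Nf, if_neg h1, if_pos h2, Int.cast_neg, Int.cast_one]
      rw [if_pos hcond, if_neg hd]
  · have h1 : ¬ (⌊(2:ℝ) ^ (c+1) * pt C i j⌋ = ⌊(2:ℝ) ^ (c+1) * pt C i' j⌋) := by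
      rw [hA]; intro hall; exact hcond (fun ℓ hℓ => hall ℓ (by omega))
    have h2 : ¬ (⌊(2:ℝ) ^ c * pt C i j⌋ = ⌊(2:ℝ) ^ c * pt C i' j⌋) := by
      rw [hB]; exact hcond
    simp only [Nf, if_neg h1, if_neg h2, Int.cast_zero]
    rw [if_neg hcond]


end digits

theorem statement (m s : ℕ) (hm : 1 ≤ m) (hs : 1 ≤ s)
    (C : Fin s → Matrix (Fin m) (Fin m) (ZMod 2))
    (u : Finset (Fin s)) (hu : u.Nonempty)
    (k : Fin s → ℕ) (hk : ∀ j ∈ u, k j ≤ m - 1)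
    (hrank : (stack C u (fun j => k j + 1)).rank = ∑ j ∈ u, (k j + 1)) :
    Gam C u k = 0 := by
  classical
  obtain ⟨j₀, hj₀⟩ := hu
  have hkm : ∀ j ∈ u, k j + 1 ≤ m := fun j hj => by have := hk j hj; omega
  have hcard : Fintype.card ((j : {x // x ∈ u}) × Fin (k j.1 + 1)) = ∑ j ∈ u, (k j + 1) := by
    rw [Fintype.card_sigma]
    simp only [Fintype.card_fin]
    exact Finset.sum_coe_sort u (fun j => k j + 1)
  have hsurj : Function.Surjective (stack C u fun j => k j + 1).mulVecLin := by
    rw [← LinearMap.range_eq_top]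
    apply Submodule.eq_top_of_finrank_eq
    rw [Module.finrank_pi, hcard]
    exact hrank
  obtain ⟨w, hw⟩ := hsurj
    (fun p => if p.1.1 = j₀ ∧ p.2.1 = k p.1.1 then 1 else 0)
  have hw' : ∀ p, (stack C u fun j => k j + 1).mulVec w p
      = if p.1.1 = j₀ ∧ p.2.1 = k p.1.1 then 1 else 0 := by
    intro p; rw [← Matrix.mulVecLin_apply, hw]
  have hrow : ∀ (j) (hj : j ∈ u) (r : ℕ) (hr1 : r < k j + 1) (hrm : r < m),
      (C j).mulVec w ⟨r, hrm⟩
        = if j = j₀ ∧ r = k j then 1 else 0 := by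
    intro j hj r hr1 hrm
    have h := hw' ⟨⟨j, hj⟩, ⟨r, hr1⟩⟩
    simp only [Matrix.mulVec, dotProduct, stack, rowAt, dif_pos hrm] at h
    exact h
  have key0 : ∀ j ∈ u, ∀ ℓ : Fin m, ℓ.1 < k j → (C j).mulVec w ℓ = 0 := by
    intro j hj ℓ hℓ
    have h := hrow j hj ℓ.1 (by omega) ℓ.2
    rw [Fin.eta] at h
    rw [h, if_neg]
    rintro ⟨-, h2⟩; omega
  have key1 : ∀ (j) (hj : j ∈ u) (hkm' : k j < m),
      (C j).mulVec w ⟨k j, hkm'⟩ = if j = j₀ then 1 else 0 := by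
    intro j hj hkm'
    have h := hrow j hj (k j) (by omega) hkm'
    rw [h]
    by_cases hjj : j = j₀ <;> simp [hjj]
  -- find n₀ with bvec m n₀ = w
  have hbs : ∀ v ∈ (Finset.univ : Finset (Fin m → ZMod 2)),
      ∃ a, ∃ _ : a ∈ Finset.range (2 ^ m), v = bvec m a := by
    apply Finset.surj_on_of_inj_on_of_card_le (f := fun a _ => bvec m a)
    · intro a ha; exact Finset.mem_univ _
    · intro a₁ a₂ h₁ h₂ heq
      apply Nat.eq_of_testBit_eq
      intro t
      by_cases ht : t < m
      · have hfun := congrFun heq ⟨t, ht⟩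
        simp only [bvec] at hfun
        cases hA : a₁.testBit t <;> cases hB : a₂.testBit t <;>
          simp [hA, hB] at hfun ⊢
      · rw [Finset.mem_range] at h₁ h₂
        have hl : 2 ^ m ≤ 2 ^ t := Nat.pow_le_pow_right (by norm_num) (by omega)
        rw [Nat.testBit_lt_two_pow (by omega), Nat.testBit_lt_two_pow (by omega)]
    · rw [Finset.card_univ, Finset.card_range, Fintype.card_fun]
      simp [ZMod.card]
  obtain ⟨n₀, hn₀r, hn₀⟩ := hbs w (Finset.mem_univ w)
  have bvec_xor : ∀ a b : ℕ, bvec m (a ^^^ b) = bvec m a + bvec m b := by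
    intro a b; funext ℓ
    simp only [bvec, Pi.add_apply, Nat.testBit_xor]
    cases ha : a.testBit ℓ.1 <;> cases hb : b.testBit ℓ.1 <;> simp [ha, hb] <;> decide
  have hn0 : n₀ ≠ 0 := by
    intro h0
    have hkm' : k j₀ < m := by have := hkm j₀ hj₀; omega
    have h1 := key1 j₀ hj₀ hkm'
    rw [if_pos rfl, hn₀, h0] at h1
    have hb0 : bvec m 0 = 0 := by funext ℓ; simp [bvec]
    rw [hb0, Matrix.mulVec_zero] at h1
    exact one_ne_zero h1.symm
  -- the sign-flip identity
  have hflip : ∀ i i' : ℕ,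
      ∏ j ∈ u, (Nf (pt C (i ^^^ n₀) j) (pt C i' j) (k j) : ℚ)
        = - ∏ j ∈ u, (Nf (pt C i j) (pt C i' j) (k j) : ℚ) := by
    intro i i'
    have hcond : ∀ j ∈ u,
        ((∀ ℓ : Fin m, ℓ.1 < k j →
            (C j).mulVec (bvec m (i ^^^ n₀)) ℓ = (C j).mulVec (bvec m i') ℓ)
          ↔ (∀ ℓ : Fin m, ℓ.1 < k j →
            (C j).mulVec (bvec m i) ℓ = (C j).mulVec (bvec m i') ℓ)) := by
      intro j hj
      rw [bvec_xor, ← hn₀]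
      apply forall_congr'
      intro ℓ
      apply imp_congr_right
      intro hℓ
      rw [Matrix.mulVec_add, Pi.add_apply, key0 j hj ℓ hℓ, add_zero]
    rw [← Finset.mul_prod_erase u _ hj₀,
      ← Finset.mul_prod_erase u (fun j => (Nf (pt C i j) (pt C i' j) (k j) : ℚ)) hj₀]
    have herase : ∏ j ∈ u.erase j₀, (Nf (pt C (i ^^^ n₀) j) (pt C i' j) (k j) : ℚ)
        = ∏ j ∈ u.erase j₀, (Nf (pt C i j) (pt C i' j) (k j) : ℚ) := by
      apply Finset.prod_congr rfl
      intro j hj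
      have hju : j ∈ u := Finset.mem_of_mem_erase hj
      have hjne : j ≠ j₀ := Finset.ne_of_mem_erase hj
      rw [Nf_eq C _ i' j (hkm j hju), Nf_eq C i i' j (hkm j hju)]
      have hD : ((C j).mulVec (bvec m (i ^^^ n₀)) ⟨k j, hkm j hju⟩
            = (C j).mulVec (bvec m i') ⟨k j, hkm j hju⟩)
          ↔ ((C j).mulVec (bvec m i) ⟨k j, hkm j hju⟩
            = (C j).mulVec (bvec m i') ⟨k j, hkm j hju⟩) := by
        rw [bvec_xor, ← hn₀, Matrix.mulVec_add, Pi.add_apply, key1 j hju _, if_neg hjne, add_zero]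
      rw [if_congr (hcond j hju) (if_congr hD rfl rfl) rfl]
    have hfac : (Nf (pt C (i ^^^ n₀) j₀) (pt C i' j₀) (k j₀) : ℚ)
        = - (Nf (pt C i j₀) (pt C i' j₀) (k j₀) : ℚ) := by
      rw [Nf_eq C _ i' j₀ (hkm j₀ hj₀), Nf_eq C i i' j₀ (hkm j₀ hj₀)]
      have hflip2 : ∀ a b : ZMod 2, (a + 1 = b ↔ ¬ (a = b)) := by decide
      have hD : ((C j₀).mulVec (bvec m (i ^^^ n₀)) ⟨k j₀, hkm j₀ hj₀⟩
            = (C j₀).mulVec (bvec m i') ⟨k j₀, hkm j₀ hj₀⟩)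
          ↔ ¬ ((C j₀).mulVec (bvec m i) ⟨k j₀, hkm j₀ hj₀⟩
            = (C j₀).mulVec (bvec m i') ⟨k j₀, hkm j₀ hj₀⟩) := by
        rw [bvec_xor, ← hn₀, Matrix.mulVec_add, Pi.add_apply, key1 j₀ hj₀ _, if_pos rfl, hflip2]
      rw [if_congr (hcond j₀ hj₀) (if_congr hD rfl rfl) rfl]
      by_cases hP : (∀ ℓ : Fin m, ℓ.1 < k j₀ →
          (C j₀).mulVec (bvec m i) ℓ = (C j₀).mulVec (bvec m i') ℓ)
      · rw [if_pos hP, if_pos hP]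
        by_cases hQ : ((C j₀).mulVec (bvec m i) ⟨k j₀, hkm j₀ hj₀⟩
            = (C j₀).mulVec (bvec m i') ⟨k j₀, hkm j₀ hj₀⟩)
        · rw [if_neg (not_not_intro hQ), if_pos hQ]
        · rw [if_pos hQ, if_neg hQ]; norm_num
      · rw [if_neg hP, if_neg hP]; norm_num
    rw [hfac, herase]
    ring
  have hzero : ∑ i ∈ Finset.range (2 ^ m), ∑ i' ∈ Finset.range (2 ^ m),
      ∏ j ∈ u, (Nf (pt C i j) (pt C i' j) (k j) : ℚ) = 0 := by
    apply Finset.sum_involution (g := fun i _ => i ^^^ n₀)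
    · intro a ha
      rw [← Finset.sum_add_distrib]
      apply Finset.sum_eq_zero
      intro i' _
      rw [hflip a i']
      ring
    · intro a ha hne heq
      apply hn0
      have h2 : a ^^^ (a ^^^ n₀) = n₀ := by
        rw [← Nat.xor_assoc, Nat.xor_self, Nat.zero_xor]
      rw [heq, Nat.xor_self] at h2
      exact h2.symm
    · intro a ha
      rw [Finset.mem_range] at ha ⊢
      exact Nat.xor_lt_two_pow ha (Finset.mem_range.mp hn₀r)
    · intro a ha
      rw [Nat.xor_assoc, Nat.xor_self, Nat.xor_zero]
  rw [Gam, hzero, mul_zero]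

end
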